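/- Let R be a ring with unit, M an R-bimodule, and α : R³ → M a function with α(x,y,z) = 0 whenever one of x,y,z equals 0 or 1, satisfying the Hochschild 3-cocycle identity (S12) x·α(y,z,t) − α(xy,z,t) + α(x,yz,t) − α(x,y,zt) + α(x,y,z)·t = 0 for all x,y,z,t ∈ R. Then the groupoid 𝒮 is a monoidal category with tensor product x ⊗ y := xy on objects and (x,a) ⊗ (y,b) := (xy, x·b + a·y) on morphisms, unit object 1, identity left and right unit constraints, and associativity constraint (x⊗y)⊗z ≅ x⊗(y⊗z) given by the morphism (xyz, α(x,y,z)); in particular ⊗ is a bifunctor and the pentagon and triangle axioms hold. -/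

import Mathlib

/-!
STATEMENT 6: Let `R` be a ring with unit, `M` an `R`-bimodule, and `α : R³ → M` a
function with `α(x,y,z) = 0` whenever one of `x,y,z` equals `0` or `1`, satisfying the
Hochschild 3-cocycle identity (S12)
`x·α(y,z,t) − α(xy,z,t) + α(x,yz,t) − α(x,y,zt) + α(x,y,z)·t = 0` for all `x,y,z,t ∈ R`.
Then the groupoid `𝒮` is a monoidal category with tensor product `x ⊗ y := xy` on
objects and `(x,a) ⊗ (y,b) := (xy, x·b + a·y)` on morphisms, unit object `1`, identity
left and right unit constraints, and associativity constraint `(x⊗y)⊗z ≅ x⊗(y⊗z)` given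
by the morphism `(xyz, α(x,y,z))`; in particular `⊗` is a bifunctor and the pentagon
and triangle axioms hold.
-/

open CategoryTheory MonoidalCategory
open MulOpposite (op)

/-- Objects of the groupoid `𝒮`: the elements of `R` (the parameter `M` is a phantom). -/
structure GObj (R M : Type) where
  base : R

/-- Morphisms of the groupoid `𝒮`: a morphism `a → b` exists only when `a = b`, and is
given by an element of `M`. -/
structure GHom {R M : Type} (a b : GObj R M) where
  eq : a.base = b.base
  val : M

theorem GHom.ext' {R M : Type} {a b : GObj R M} {f g : GHom a b}
    (h : f.val = g.val) : f = g := by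
  cases f; cases g; cases h; rfl

variable (R M : Type)

instance GObj.category [AddCommGroup M] : Category (GObj R M) where
  Hom a b := GHom a b
  id a := ⟨rfl, 0⟩
  comp f g := ⟨f.eq.trans g.eq, f.val + g.val⟩
  id_comp f := GHom.ext' (zero_add _)
  comp_id f := GHom.ext' (add_zero _)
  assoc f g h := GHom.ext' (add_assoc _ _ _)

/-- The monoidal structure on `𝒮` determined by the associativity data `α` : the tensor
product is the multiplication of `R`, `(x,a) ⊗ (y,b) = (xy, x·b + a·y)` (where `·`
denotes the two-sided bimodule actions), the unit is `1` with identity unit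
constraints, and the associator is `(xyz, α(x,y,z))`. -/
def gMonStruct [Ring R] [AddCommGroup M] [Module R M] [Module Rᵐᵒᵖ M]
    [SMulCommClass R Rᵐᵒᵖ M] (α : R → R → R → M) :
    MonoidalCategoryStruct (GObj R M) where
  tensorObj a b := ⟨a.base * b.base⟩
  whiskerLeft a _ _ f := ⟨by dsimp; rw [f.eq], a.base • f.val⟩
  whiskerRight f b := ⟨by dsimp; rw [f.eq], op b.base • f.val⟩
  tensorHom {a₁ b₁ a₂ b₂} f g :=
    ⟨by dsimp; rw [f.eq, g.eq], a₁.base • g.val + op a₂.base • f.val⟩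
  tensorUnit := ⟨1⟩
  associator a b c :=
    { hom := ⟨mul_assoc a.base b.base c.base, α a.base b.base c.base⟩
      inv := ⟨(mul_assoc a.base b.base c.base).symm, -α a.base b.base c.base⟩
      hom_inv_id := GHom.ext' (add_neg_cancel _)
      inv_hom_id := GHom.ext' (neg_add_cancel _) }
  leftUnitor a :=
    { hom := ⟨one_mul a.base, 0⟩
      inv := ⟨(one_mul a.base).symm, 0⟩
      hom_inv_id := GHom.ext' (zero_add 0)
      inv_hom_id := GHom.ext' (zero_add 0) }
  rightUnitor a :=
    { hom := ⟨mul_one a.base, 0⟩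
      inv := ⟨(mul_one a.base).symm, 0⟩
      hom_inv_id := GHom.ext' (zero_add 0)
      inv_hom_id := GHom.ext' (zero_add 0) }

/-! A morphism of `𝒮` is determined by its `M`-component, so every axiom of a monoidal
category becomes an identity in `M`. Bifunctoriality and the naturality conditions are
bimodule identities (naturality of the associator uses that the two actions commute); the
pentagon is exactly the cocycle identity (S12), and the triangle is the normalisation
`α(x,1,y) = 0`. -/

section

variable {R M}

@[ext]
theorem GObj.hom_ext [AddCommGroup M] {a b : GObj R M} {f g : a ⟶ b} (h : f.val = g.val) :
    f = g :=
  GHom.ext' h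

@[simp]
theorem GObj.id_val [AddCommGroup M] (a : GObj R M) : (𝟙 a : GHom a a).val = 0 := rfl

@[simp]
theorem GObj.comp_val [AddCommGroup M] {a b c : GObj R M} (f : a ⟶ b) (g : b ⟶ c) :
    (f ≫ g : GHom a c).val = f.val + g.val := rfl

variable [Ring R] [AddCommGroup M] [Module R M] [Module Rᵐᵒᵖ M] [SMulCommClass R Rᵐᵒᵖ M]
  (α : R → R → R → M)

@[simp]
theorem gMonStruct_tensorObj_base (a b : GObj R M) :
    letI := gMonStruct R M α; (a ⊗ b).base = a.base * b.base := rfl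

@[simp]
theorem gMonStruct_whiskerLeft_val (a : GObj R M) {b c : GObj R M} (f : b ⟶ c) :
    letI := gMonStruct R M α; (a ◁ f).val = a.base • f.val := rfl

@[simp]
theorem gMonStruct_whiskerRight_val {a b : GObj R M} (f : a ⟶ b) (c : GObj R M) :
    letI := gMonStruct R M α; (f ▷ c).val = op c.base • f.val := rfl

@[simp]
theorem gMonStruct_tensorHom_val {a₁ b₁ a₂ b₂ : GObj R M} (f : a₁ ⟶ b₁) (g : a₂ ⟶ b₂) :
    letI := gMonStruct R M α; (f ⊗ₘ g).val = a₁.base • g.val + op a₂.base • f.val := rfl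

@[simp]
theorem gMonStruct_associator_hom_val (a b c : GObj R M) :
    letI := gMonStruct R M α; (α_ a b c).hom.val = α a.base b.base c.base := rfl

@[simp]
theorem gMonStruct_leftUnitor_hom_val (a : GObj R M) :
    letI := gMonStruct R M α; (λ_ a).hom.val = 0 := rfl

@[simp]
theorem gMonStruct_rightUnitor_hom_val (a : GObj R M) :
    letI := gMonStruct R M α; (ρ_ a).hom.val = 0 := rfl

@[simp]
theorem gMonStruct_tensorUnit_base : letI := gMonStruct R M α; (𝟙_ (GObj R M)).base = 1 := rfl

abbrev gMonoidalCategory (hα : ∀ x y : R, α x 1 y = 0)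
    (hS12 : ∀ x y z t : R,
      x • α y z t - α (x * y) z t + α x (y * z) t - α x y (z * t) + op t • α x y z = 0) :
    MonoidalCategory (GObj R M) :=
  letI := gMonStruct R M α
  { tensorHom_def := fun f g => by ext; simp [f.eq]; abel
    id_tensorHom_id := fun a b => by ext; simp
    tensorHom_comp_tensorHom := fun f₁ f₂ g₁ g₂ => by ext; simp [f₁.eq, f₂.eq, smul_add]; abel
    whiskerLeft_id := fun a b => by ext; simp
    id_whiskerRight := fun a b => by ext; simp
    associator_naturality := fun f₁ f₂ f₃ => by
      ext; simp [f₁.eq, f₂.eq, f₃.eq, mul_smul, smul_add, smul_comm _ (op _) f₂.val]; abel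
    leftUnitor_naturality := fun f => by ext; simp
    rightUnitor_naturality := fun f => by ext; simp
    pentagon := fun w x y z => by
      ext; simp
      linear_combination (norm := abel) hS12 w.base x.base y.base z.base
    triangle := fun x y => by ext; simp [hα] }

end

/-- `𝒮` is a monoidal category with the given monoidal structure. -/
theorem gObj_monoidal [Ring R] [AddCommGroup M] [Module R M] [Module Rᵐᵒᵖ M]
    [SMulCommClass R Rᵐᵒᵖ M] (α : R → R → R → M)
    (hαnorm : ∀ x y z : R, α 0 y z = 0 ∧ α x 0 z = 0 ∧ α x y 0 = 0 ∧
      α 1 y z = 0 ∧ α x 1 z = 0 ∧ α x y 1 = 0)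
    (hS12 : ∀ x y z t : R,
      x • α y z t - α (x * y) z t + α x (y * z) t - α x y (z * t)
        + op t • α x y z = 0) :
    ∃ inst : MonoidalCategory (GObj R M),
      inst.toMonoidalCategoryStruct = gMonStruct R M α :=
  ⟨gMonoidalCategory α (fun x y => (hαnorm x 1 y).2.2.2.2.1) hS12, rfl⟩
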